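/- The Möbius function is unbounded on the mesh pattern poset 𝓜: for every natural number N there exist mesh patterns m ≤ p with |μ(m, p)| > N. -/

import Mathlib

/-!
# The poset of mesh patterns

A mesh pattern is a permutation of `{1, ..., len}` together with a set of shaded
boxes in the `(len+1) × (len+1)` grid (boxes are indexed by their south-west corner,
so boxes have coordinates in `{0, ..., len} × {0, ..., len}`).

We normalise the permutation as a function `ℕ → ℕ` (using 1-based indexing) which is
`0` outside of `[1, len]`; this makes equality of mesh patterns coincide with equality
of the underlying data.
-/

structure MeshPattern where
  len : ℕ
  perm : ℕ → ℕ
  sh : Finset (ℕ × ℕ)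
  perm_mem : ∀ i, 1 ≤ i → i ≤ len → 1 ≤ perm i ∧ perm i ≤ len
  perm_zero : ∀ i, i = 0 ∨ len < i → perm i = 0
  perm_inj : ∀ i j, 1 ≤ i → i ≤ len → 1 ≤ j → j ≤ len → perm i = perm j → i = j
  perm_surj : ∀ v, 1 ≤ v → v ≤ len → ∃ i, 1 ≤ i ∧ i ≤ len ∧ perm i = v
  sh_mem : ∀ q ∈ sh, q.1 ≤ len ∧ q.2 ≤ len

namespace MeshPattern

/-- The (1-based) position of the value `v` in the underlying permutation of `m`. -/
noncomputable def pos (m : MeshPattern) (v : ℕ) : ℕ := Function.invFun m.perm v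

/-- The dimension of a mesh pattern: length of the permutation plus number of shaded boxes. -/
def dim (m : MeshPattern) : ℕ := m.len + m.sh.card

/-- Given (the position map of an occurrence) `η` of `m` in `p`, the extended column
boundary map: pattern column boundary `i` (for `0 ≤ i ≤ m.len + 1`) is sent to the
corresponding column boundary in `p`.  Boxes of `p` with first coordinate `a` satisfying
`colExt m p η i ≤ a < colExt m p η (i+1)` are exactly the boxes lying horizontally
within the region corresponding to pattern boxes with first coordinate `i`. -/
def colExt (m p : MeshPattern) (η : ℕ → ℕ) (i : ℕ) : ℕ :=
  if i = 0 then 0 else if i ≤ m.len then η i else p.len + 1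

/-- The analogous extended row (value) boundary map. -/
noncomputable def valExt (m p : MeshPattern) (η : ℕ → ℕ) (j : ℕ) : ℕ :=
  if j = 0 then 0 else if j ≤ m.len then p.perm (η (m.pos j)) else p.len + 1

/-- The box `(a, b)` of `p` lies in the region `R_η(i, j)` of the box `(i, j)` of `m`. -/
def inRegion (m p : MeshPattern) (η : ℕ → ℕ) (i j a b : ℕ) : Prop :=
  colExt m p η i ≤ a ∧ a < colExt m p η (i + 1) ∧
    valExt m p η j ≤ b ∧ b < valExt m p η (j + 1)

/-- The point of `p` at position `y` lies in the open interior of the region `R_η(i, j)`. -/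
def interiorPt (m p : MeshPattern) (η : ℕ → ℕ) (i j y : ℕ) : Prop :=
  colExt m p η i < y ∧ y < colExt m p η (i + 1) ∧
    valExt m p η j < p.perm y ∧ p.perm y < valExt m p η (j + 1)

/-- `η` is an occurrence of the mesh pattern `m` in the mesh pattern `p`:
a (normalised) strictly increasing choice of positions realising the underlying
classical pattern, such that for every shaded box of `m` the corresponding region of `p`
contains no point of `p` in its interior and consists entirely of shaded boxes of `p`. -/
structure IsOcc (m p : MeshPattern) (η : ℕ → ℕ) : Prop where
  zero : ∀ i, i = 0 ∨ m.len < i → η i = 0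
  mem : ∀ i, 1 ≤ i → i ≤ m.len → 1 ≤ η i ∧ η i ≤ p.len
  mono : ∀ i j, 1 ≤ i → i < j → j ≤ m.len → η i < η j
  pattern : ∀ i j, 1 ≤ i → i ≤ m.len → 1 ≤ j → j ≤ m.len →
    (m.perm i < m.perm j ↔ p.perm (η i) < p.perm (η j))
  no_point : ∀ q ∈ m.sh, ∀ y, 1 ≤ y → y ≤ p.len → ¬ interiorPt m p η q.1 q.2 y
  shaded : ∀ q ∈ m.sh, ∀ a b, inRegion m p η q.1 q.2 a b → (a, b) ∈ p.sh

/-- The mesh pattern poset: `m ≤ p` iff there is an occurrence of `m` in `p`. -/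
instance : LE MeshPattern := ⟨fun m p => ∃ η, IsOcc m p η⟩

instance : LT MeshPattern := ⟨fun m p => m ≤ p ∧ m ≠ p⟩

/-- `b` covers `a` in the mesh pattern poset. -/
def CovByM (a b : MeshPattern) : Prop := a < b ∧ ¬ ∃ z, a < z ∧ z < b

open Classical in
/-- The Möbius function of a (locally finite) partial order `r`, computed with a fuel
parameter: `muFuel r n a b` is the Möbius function `μ(a, b)` provided `n` is at least the
length of the longest chain from `a` to `b` (with the convention `μ(a, b) = 0` if
`¬ r a b`). -/
noncomputable def muFuel {α : Type*} (r : α → α → Prop) : ℕ → α → α → ℤ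
  | 0, a, b => if a = b then 1 else 0
  | n + 1, a, b =>
      if a = b then 1
      else if r a b then - ∑ᶠ c ∈ {c | r a c ∧ r c b ∧ c ≠ b}, muFuel r n a c
      else 0

/-- The Möbius function of the mesh pattern poset.  Since every chain from `m` to `p` has
length at most `dim p`, the fuel `dim p + 1` is sufficient, so this is the genuine Möbius
function: `mu m m = 1`, `mu m p = -∑_{m ≤ c < p} mu m c` for `m < p`, and `mu m p = 0`
when `m ≰ p`. -/
noncomputable def mu (m p : MeshPattern) : ℤ := muFuel (· ≤ ·) (p.dim + 1) m p

/-- The classical permutation poset `𝓟`, realised as the subposet of unshaded mesh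
patterns (for unshaded patterns, mesh occurrence is exactly classical pattern
containment).  Its Möbius function. -/
noncomputable def muP (σ π : {m : MeshPattern // m.sh = ∅}) : ℤ :=
  muFuel (· ≤ ·) (π.1.len + 1) σ π

/-- The mesh pattern with underlying identity permutation of length `n`
and shaded boxes `s`. -/
def ofId (n : ℕ) (s : Finset (ℕ × ℕ)) (hs : ∀ q ∈ s, q.1 ≤ n ∧ q.2 ≤ n) : MeshPattern where
  len := n
  perm := fun i => if 1 ≤ i ∧ i ≤ n then i else 0
  sh := s
  perm_mem := by intro i h1 h2; (try dsimp only); rw [if_pos ⟨h1, h2⟩]; omega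
  perm_zero := by intro i h; (try dsimp only); rw [if_neg]; omega
  perm_inj := by intro i j h1 h2 h3 h4 h; (try dsimp only at h); rw [if_pos ⟨h1, h2⟩, if_pos ⟨h3, h4⟩] at h; omega
  perm_surj := by
    intro v h1 h2; exact ⟨v, h1, h2, by (try dsimp only); rw [if_pos ⟨h1, h2⟩]⟩
  sh_mem := hs

/-- The mesh pattern with underlying decreasing permutation of length `n`
and shaded boxes `s`. -/
def ofRev (n : ℕ) (s : Finset (ℕ × ℕ)) (hs : ∀ q ∈ s, q.1 ≤ n ∧ q.2 ≤ n) : MeshPattern where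
  len := n
  perm := fun i => if 1 ≤ i ∧ i ≤ n then n + 1 - i else 0
  sh := s
  perm_mem := by intro i h1 h2; (try dsimp only); rw [if_pos ⟨h1, h2⟩]; omega
  perm_zero := by intro i h; (try dsimp only); rw [if_neg]; omega
  perm_inj := by intro i j h1 h2 h3 h4 h; (try dsimp only at h); rw [if_pos ⟨h1, h2⟩, if_pos ⟨h3, h4⟩] at h; omega
  perm_surj := by
    intro v h1 h2
    exact ⟨n + 1 - v, by omega, by omega, by (try dsimp only); rw [if_pos ⟨by omega, by omega⟩]; omega⟩
  sh_mem := hs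

/-- The unshaded singleton mesh pattern `1^∅`. -/
def one0 : MeshPattern := ofId 1 ∅ (by simp)

/-- The empty mesh pattern `ε^∅`. -/
def eps0 : MeshPattern := ofId 0 ∅ (by simp)

/-- The empty mesh pattern `ε^{(0,0)}` with its single box shaded. -/
def eps00 : MeshPattern := ofId 0 {(0, 0)} (by decide)

/-- The singleton mesh patterns `1^{(a,b)}` for `a b ∈ {0,1}`. -/
def one00 : MeshPattern := ofId 1 {(0, 0)} (by decide)
def one10 : MeshPattern := ofId 1 {(1, 0)} (by decide)
def one01 : MeshPattern := ofId 1 {(0, 1)} (by decide)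
def one11 : MeshPattern := ofId 1 {(1, 1)} (by decide)

/-- The mesh pattern `21^{(0,0),(1,0)}`. -/
def pat21 : MeshPattern := ofRev 2 {(0, 0), (1, 0)} (by decide)

/-- Replace the shading of `p` by a subset `A ⊆ sh p` (same underlying permutation):
this is the mesh pattern `(cl p)^A`. -/
def reshade (p : MeshPattern) (A : Finset (ℕ × ℕ)) (hA : A ⊆ p.sh) : MeshPattern :=
  { p with sh := A, sh_mem := fun q hq => p.sh_mem q (hA hq) }

/-- The occurrence `η` of `s` in `p` uses the shaded box `(a, b) ∈ sh p`. -/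
def UsesBox (s p : MeshPattern) (η : ℕ → ℕ) (a b : ℕ) : Prop :=
  (a, b) ∈ p.sh ∧ ∃ i j, (i, j) ∈ s.sh ∧ inRegion s p η i j a b

/-- The position map of the occurrence of `p − x` in `p` avoiding the point at
position `x`. -/
def etaDel (p : MeshPattern) (x : ℕ) : ℕ → ℕ := fun i =>
  if 1 ≤ i ∧ i ≤ p.len - 1 then (if i < x then i else i + 1) else 0

/-- The underlying permutation of the pattern obtained from `p` by deleting the point at
position `x`. -/
def delPerm (p : MeshPattern) (x : ℕ) : ℕ → ℕ := fun i =>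
  if 1 ≤ i ∧ i ≤ p.len - 1 then
    (if p.perm (etaDel p x i) < p.perm x then p.perm (etaDel p x i)
     else p.perm (etaDel p x i) - 1)
  else 0

/-- `q` is the mesh pattern `p − x` obtained from `p` by deleting the point at position
`x` (where `1 ≤ x ≤ len p`): the underlying permutation is obtained by deleting that
letter, and a box of `q` is shaded exactly when the corresponding region of `p` (under
the occurrence `etaDel p x`) is entirely shaded and contains no point of `p` in its
interior.  In particular `etaDel p x` is an occurrence of `q` in `p`. -/
def IsDeletion (p : MeshPattern) (x : ℕ) (q : MeshPattern) : Prop :=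
  1 ≤ x ∧ x ≤ p.len ∧ q.len + 1 = p.len ∧ q.perm = delPerm p x ∧
    ∀ i j : ℕ, ((i, j) ∈ q.sh ↔ i ≤ q.len ∧ j ≤ q.len ∧
      (∀ a b, inRegion q p (etaDel p x) i j a b → (a, b) ∈ p.sh) ∧
      ∀ y, 1 ≤ y → y ≤ p.len → ¬ interiorPt q p (etaDel p x) i j y)

/-- Deleting the point at position `x` of `p` (with `q = p − x`) merges shadings:
some shaded box of `q` corresponds to more than one shaded box of `p`. -/
def MergesShadings (p : MeshPattern) (x : ℕ) (q : MeshPattern) : Prop :=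
  ∃ i j, (i, j) ∈ q.sh ∧ ∃ a b a' b', (a, b) ≠ (a', b') ∧ (a, b) ∈ p.sh ∧
    (a', b') ∈ p.sh ∧ inRegion q p (etaDel p x) i j a b ∧
    inRegion q p (etaDel p x) i j a' b'

/-- `f 0 ⋖ f 1 ⋖ ⋯ ⋖ f k` is a maximal chain of length `k` from `a` to `b`. -/
def IsMaxChain (a b : MeshPattern) (k : ℕ) (f : ℕ → MeshPattern) : Prop :=
  f 0 = a ∧ f k = b ∧ ∀ i < k, CovByM (f i) (f (i + 1))

/-- Underlying permutation of the direct sum `s ⊕ t`. -/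
def dsumPerm (s t : MeshPattern) : ℕ → ℕ := fun i =>
  if i ≤ s.len then s.perm i
  else if i ≤ s.len + t.len then t.perm (i - s.len) + s.len
  else 0

/-- Shading of the direct sum `s ⊕ t`: the shadings of `s` and of `t` (translated), where
boxes on the shared boundary are extended to the new boundary (north/east for boxes of
`s`, south/west for boxes of `t`). -/
def dsumSh (s t : MeshPattern) : Finset (ℕ × ℕ) :=
  s.sh ∪ t.sh.image (fun q => (q.1 + s.len, q.2 + s.len)) ∪
    (s.sh.filter (fun q => q.2 = s.len)).biUnion
      (fun q => (Finset.range (t.len + 1)).image (fun k => (q.1, s.len + k))) ∪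
    (s.sh.filter (fun q => q.1 = s.len)).biUnion
      (fun q => (Finset.range (t.len + 1)).image (fun k => (s.len + k, q.2))) ∪
    (t.sh.filter (fun q => q.2 = 0)).biUnion
      (fun q => (Finset.range (s.len + 1)).image (fun k => (q.1 + s.len, k))) ∪
    (t.sh.filter (fun q => q.1 = 0)).biUnion
      (fun q => (Finset.range (s.len + 1)).image (fun k => (k, q.2 + s.len)))

/-- `r = s ⊕ t` is the direct sum of the mesh patterns `s` and `t` (defined when the top
right corner box of `s` and the bottom left corner box of `t` are not shaded). -/
def IsDSum (s t r : MeshPattern) : Prop :=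
  (s.len, s.len) ∉ s.sh ∧ (0, 0) ∉ t.sh ∧
    r.len = s.len + t.len ∧ r.perm = dsumPerm s t ∧ r.sh = dsumSh s t

/-- A mesh pattern is indecomposable if it cannot be written as a direct sum `a ⊕ b`
with neither `a` nor `b` equal to it. -/
def Indecomposable (m : MeshPattern) : Prop :=
  ¬ ∃ s t, s ≠ m ∧ t ≠ m ∧ IsDSum s t m

/-- `SumOfList L m`: `m` is the direct sum of the list `L` of mesh patterns
(the empty list summing to the empty pattern `ε^∅`). -/
def SumOfList : List MeshPattern → MeshPattern → Prop
  | [], m => m.len = 0 ∧ m.sh = ∅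
  | [a], m => a = m
  | a :: b :: rest, m => ∃ r, SumOfList (b :: rest) r ∧ IsDSum a r m

/-- Underlying permutation of the skew sum `s ⊖ t`. -/
def sksumPerm (s t : MeshPattern) : ℕ → ℕ := fun i =>
  if i = 0 then 0
  else if i ≤ s.len then s.perm i + t.len
  else if i ≤ s.len + t.len then t.perm (i - s.len)
  else 0

/-- Shading of the skew sum `s ⊖ t` (s placed to the north west of `t`), with boxes on
the shared boundary extended to the new boundary. -/
def sksumSh (s t : MeshPattern) : Finset (ℕ × ℕ) :=
  s.sh.image (fun q => (q.1, q.2 + t.len)) ∪ t.sh.image (fun q => (q.1 + s.len, q.2)) ∪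
    (s.sh.filter (fun q => q.1 = s.len)).biUnion
      (fun q => (Finset.range (t.len + 1)).image (fun k => (s.len + k, q.2 + t.len))) ∪
    (s.sh.filter (fun q => q.2 = 0)).biUnion
      (fun q => (Finset.range (t.len + 1)).image (fun k => (q.1, k))) ∪
    (t.sh.filter (fun q => q.2 = t.len)).biUnion
      (fun q => (Finset.range (s.len + 1)).image (fun k => (q.1 + s.len, t.len + k))) ∪
    (t.sh.filter (fun q => q.1 = 0)).biUnion
      (fun q => (Finset.range (s.len + 1)).image (fun k => (k, q.2)))

/-- `r = s ⊖ t` is the skew sum of the mesh patterns `s` and `t` (defined when the bottom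
right corner box of `s` and the top left corner box of `t` are not shaded). -/
def IsSkewSum (s t r : MeshPattern) : Prop :=
  (s.len, 0) ∉ s.sh ∧ (0, t.len) ∉ t.sh ∧
    r.len = s.len + t.len ∧ r.perm = sksumPerm s t ∧ r.sh = sksumSh s t

/-- A mesh pattern is skew-indecomposable if it cannot be written as a skew sum `a ⊖ b`
with neither `a` nor `b` equal to it. -/
def SkewIndecomposable (m : MeshPattern) : Prop :=
  ¬ ∃ s t, s ≠ m ∧ t ≠ m ∧ IsSkewSum s t m

/-- Connectivity (zig-zag of comparabilities) inside a subset `I` of the mesh pattern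
poset. -/
def ConnIn (I : Set MeshPattern) (a b : MeshPattern) : Prop :=
  Relation.ReflTransGen (fun u v => u ∈ I ∧ v ∈ I ∧ (u ≤ v ∨ v ≤ u)) a b

/-- The interval `[m, p]` is strongly disconnected: its open interior has at least two
connected components each containing more than one element. -/
def StronglyDisconnectedInterval (m p : MeshPattern) : Prop :=
  ∃ a b, (m < a ∧ a < p) ∧ (m < b ∧ b < p) ∧ ¬ ConnIn {c | m < c ∧ c < p} a b ∧
    (∃ a', (m < a' ∧ a' < p) ∧ a' ≠ a ∧ ConnIn {c | m < c ∧ c < p} a a') ∧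
    (∃ b', (m < b' ∧ b' < p) ∧ b' ≠ b ∧ ConnIn {c | m < c ∧ c < p} b b')

/-- The occurrence of `m` in `m ⊕ m` (or `m ⊖ m`) as the first `|m|` points. -/
def eta1 (m : MeshPattern) : ℕ → ℕ := fun i => if 1 ≤ i ∧ i ≤ m.len then i else 0

/-- The occurrence of `m` in `m ⊕ m` (or `m ⊖ m`) as the last `|m|` points. -/
def eta2 (m : MeshPattern) : ℕ → ℕ := fun i => if 1 ≤ i ∧ i ≤ m.len then i + m.len else 0

/-- `i` (with `2 ≤ i ≤ len`) is the position of an adjacency tail: the letter at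
position `i` differs by one from the letter at position `i - 1`. -/
def IsAdjTail (m : MeshPattern) (i : ℕ) : Prop :=
  2 ≤ i ∧ i ≤ m.len ∧ (m.perm i = m.perm (i - 1) + 1 ∨ m.perm (i - 1) = m.perm i + 1)

open Classical in
/-- `adj(cl m)`: the number of adjacency tails of the underlying permutation of `m`. -/
noncomputable def adjCount (m : MeshPattern) : ℕ :=
  ((Finset.range (m.len + 1)).filter (fun i => IsAdjTail m i)).card

/-- The total number of mesh patterns of length `n`. -/
def Tcount (n : ℕ) : ℕ := n.factorial * 2 ^ ((n + 1) ^ 2)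

end MeshPattern

/-- Binary words, partially ordered by (not necessarily contiguous) subword containment:
the poset `𝓦`. -/
structure Word where
  toList : List Bool

instance : LE Word := ⟨fun u w => u.toList.Sublist w.toList⟩

/-- The binary word associated to a mesh pattern `m` in the class `Γ`: it has length
`|m| - 1`, and for each letter `i` with `2 ≤ i ≤ |m|` the corresponding entry is
`false` (i.e. `0`) if the letter `i` appears before the letter `1` in `cl m`,
and `true` (i.e. `1`) otherwise. -/
noncomputable def MeshPattern.wordOf (m : MeshPattern) : List Bool :=
  (List.range (m.len - 1)).map (fun k => if m.pos (k + 2) < m.pos 1 then false else true)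

namespace MeshPattern

/-!
Let `OE_k = 1 3 ⋯ (2k-1) 2 4 ⋯ 2k`, without shading. Everything below an unshaded pattern is
unshaded, and an unshaded pattern of the same length below it equals it; so `[OE_k, OE_{k+1}]`
has rank two and its atoms are the one-point deletions of `OE_{k+1}`. For `k ≥ 2` these
`2k + 2` deletions are pairwise distinct, and each contains `OE_k`: delete in addition the point
whose value is adjacent to the deleted one. Hence `μ(OE_k, OE_{k+1}) = 2k + 1`.
-/

theorem ext {m p : MeshPattern} (hlen : m.len = p.len) (hperm : m.perm = p.perm)
    (hsh : m.sh = p.sh) : m = p := by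
  cases m; cases p; cases hlen; cases hperm; cases hsh; rfl

theorem ne_of_len_ne {m p : MeshPattern} (h : m.len ≠ p.len) : m ≠ p :=
  fun hmp => h (congrArg len hmp)

theorem pos_spec (m : MeshPattern) {v : ℕ} (h1 : 1 ≤ v) (h2 : v ≤ m.len) :
    1 ≤ m.pos v ∧ m.pos v ≤ m.len ∧ m.perm (m.pos v) = v := by
  obtain ⟨i, -, -, hi⟩ := m.perm_surj v h1 h2
  have hv : m.perm (m.pos v) = v := Function.invFun_eq ⟨i, hi⟩
  by_contra h
  have := m.perm_zero (m.pos v) (by omega)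
  omega

theorem card_filter_perm_lt (m : MeshPattern) {i : ℕ} (h1 : 1 ≤ i) (h2 : i ≤ m.len) :
    ((Finset.Icc 1 m.len).filter (fun j => m.perm j < m.perm i)).card = m.perm i - 1 := by
  have hcard : (Finset.Icc 1 (m.perm i - 1)).card = m.perm i - 1 := by simp
  rw [← hcard]
  apply Finset.card_bij (fun j _ => m.perm j)
  · intro j hj
    simp only [Finset.mem_filter, Finset.mem_Icc] at hj ⊢
    have := m.perm_mem j hj.1.1 hj.1.2
    omega
  · intro a ha b hb hab
    simp only [Finset.mem_filter, Finset.mem_Icc] at ha hb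
    exact m.perm_inj a b ha.1.1 ha.1.2 hb.1.1 hb.1.2 hab
  · intro v hv
    simp only [Finset.mem_Icc] at hv
    have := m.perm_mem i h1 h2
    obtain ⟨j, hj1, hj2, rfl⟩ := m.perm_surj v hv.1 (by omega)
    exact ⟨j, by simp only [Finset.mem_filter, Finset.mem_Icc]; omega, rfl⟩

/-- `perm i - 1` counts the `j` with `perm j < perm i`. -/
theorem perm_eq_of_lt_iff {m p : MeshPattern} (hlen : m.len = p.len)
    (h : ∀ i j, 1 ≤ i → i ≤ m.len → 1 ≤ j → j ≤ m.len →
      (m.perm i < m.perm j ↔ p.perm i < p.perm j)) : m.perm = p.perm := by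
  funext i
  by_cases hi : 1 ≤ i ∧ i ≤ m.len
  · have hm := m.card_filter_perm_lt hi.1 hi.2
    have hp := p.card_filter_perm_lt (i := i) hi.1 (by omega)
    rw [Finset.filter_congr fun j hj =>
      h j i (Finset.mem_Icc.1 hj).1 (Finset.mem_Icc.1 hj).2 hi.1 hi.2, hlen, hp] at hm
    have := m.perm_mem i hi.1 hi.2
    have := p.perm_mem i hi.1 (by omega)
    omega
  · rw [m.perm_zero i (by omega), p.perm_zero i (by omega)]

namespace IsOcc

variable {c p : MeshPattern} {η : ℕ → ℕ}

theorem apply_add_sub_le (occ : IsOcc c p η) {i j : ℕ} (h1 : 1 ≤ i) (hij : i ≤ j)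
    (hj : j ≤ c.len) : η i + (j - i) ≤ η j := by
  induction j, hij using Nat.le_induction with
  | base => omega
  | succ n hn ih =>
    have := occ.mono n (n + 1) (by omega) (by omega) hj
    have := ih (by omega)
    omega

theorem le_apply (occ : IsOcc c p η) {i : ℕ} (h1 : 1 ≤ i) (h2 : i ≤ c.len) : i ≤ η i := by
  have := occ.apply_add_sub_le le_rfl h1 h2
  have := occ.mem 1 le_rfl (by omega)
  omega

theorem apply_add_sub_le_len (occ : IsOcc c p η) {i : ℕ} (h1 : 1 ≤ i) (h2 : i ≤ c.len) :
    η i + (c.len - i) ≤ p.len := by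
  have := occ.apply_add_sub_le h1 h2 le_rfl
  have := occ.mem c.len (by omega) le_rfl
  omega

theorem len_le (occ : IsOcc c p η) : c.len ≤ p.len := by
  rcases Nat.eq_zero_or_pos c.len with h | h
  · omega
  · have := occ.le_apply h le_rfl
    have := occ.apply_add_sub_le_len h le_rfl
    omega

theorem colExt_lt_succ (occ : IsOcc c p η) {i : ℕ} (hi : i ≤ c.len) :
    colExt c p η i < colExt c p η (i + 1) := by
  rw [colExt, colExt, if_neg i.succ_ne_zero]
  rcases Nat.eq_zero_or_pos i with rfl | hpos
  · by_cases h : 1 ≤ c.len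
    · rw [if_pos rfl, if_pos h]
      exact (occ.mem 1 le_rfl h).1
    · rw [if_pos rfl, if_neg h]
      omega
  · rw [if_neg hpos.ne', if_pos hi]
    by_cases h : i + 1 ≤ c.len
    · rw [if_pos h]
      exact occ.mono i (i + 1) hpos (by omega) h
    · rw [if_neg h]
      have := (occ.mem i hpos hi).2
      omega

theorem valExt_lt_succ (occ : IsOcc c p η) {j : ℕ} (hj : j ≤ c.len) :
    valExt c p η j < valExt c p η (j + 1) := by
  have hval : ∀ v, 1 ≤ v → v ≤ c.len →
      1 ≤ p.perm (η (c.pos v)) ∧ p.perm (η (c.pos v)) ≤ p.len := fun v hv1 hv2 =>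
    have hpos := c.pos_spec hv1 hv2
    have hη := occ.mem _ hpos.1 hpos.2.1
    p.perm_mem _ hη.1 hη.2
  rw [valExt, valExt, if_neg j.succ_ne_zero]
  rcases Nat.eq_zero_or_pos j with rfl | hpos
  · by_cases h : 1 ≤ c.len
    · rw [if_pos rfl, if_pos h]
      exact (hval 1 le_rfl h).1
    · rw [if_pos rfl, if_neg h]
      omega
  · rw [if_neg hpos.ne', if_pos hj]
    by_cases h : j + 1 ≤ c.len
    · rw [if_pos h]
      obtain ⟨hp1, hp2, hp3⟩ := c.pos_spec hpos hj
      obtain ⟨hq1, hq2, hq3⟩ := c.pos_spec (v := j + 1) (by omega) h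
      exact (occ.pattern _ _ hp1 hp2 hq1 hq2).1 (by omega)
    · rw [if_neg h]
      have := (hval j hpos hj).2
      omega
/-- The region of a shaded box is never empty, so it forces a shaded box in `p`. -/
theorem sh_eq_empty (occ : IsOcc c p η) (hp : p.sh = ∅) : c.sh = ∅ := by
  refine Finset.eq_empty_of_forall_notMem fun ⟨i, j⟩ hq => ?_
  obtain ⟨hi, hj⟩ := c.sh_mem _ hq
  have := occ.shaded _ hq (colExt c p η i) (valExt c p η j)
    ⟨le_rfl, occ.colExt_lt_succ hi, le_rfl, occ.valExt_lt_succ hj⟩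
  simp [hp] at this

end IsOcc

theorem len_le_of_le {c p : MeshPattern} (h : c ≤ p) : c.len ≤ p.len :=
  h.elim fun _ occ => occ.len_le

theorem sh_eq_empty_of_le {c p : MeshPattern} (h : c ≤ p) (hp : p.sh = ∅) : c.sh = ∅ :=
  h.elim fun _ occ => occ.sh_eq_empty hp

theorem eq_of_le_of_len_eq {c p : MeshPattern} (h : c ≤ p) (hlen : c.len = p.len)
    (hp : p.sh = ∅) : c = p := by
  obtain ⟨η, occ⟩ := h
  have hη : ∀ i, 1 ≤ i → i ≤ c.len → η i = i := fun i h1 h2 => by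
    have := occ.le_apply h1 h2
    have := occ.apply_add_sub_le_len h1 h2
    omega
  refine ext hlen (perm_eq_of_lt_iff hlen fun i j hi1 hi2 hj1 hj2 => ?_)
    (by rw [occ.sh_eq_empty hp, hp])
  simpa only [hη i hi1 hi2, hη j hj1 hj2] using occ.pattern i j hi1 hi2 hj1 hj2

theorem colExt_eta1 (m : MeshPattern) {i : ℕ} (hi : i ≤ m.len + 1) :
    colExt m m (eta1 m) i = i := by
  unfold colExt eta1
  split_ifs <;> omega

theorem valExt_eta1 (m : MeshPattern) {j : ℕ} (hj : j ≤ m.len + 1) :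
    valExt m m (eta1 m) j = j := by
  unfold valExt eta1
  split_ifs with h0 h1 h2
  · omega
  · exact (m.pos_spec (by omega) h1).2.2
  · exact absurd (m.pos_spec (by omega) h1) (by omega)
  · omega

theorem isOcc_eta1 (m : MeshPattern) : IsOcc m m (eta1 m) where
  zero i h := by unfold eta1; split_ifs <;> omega
  mem i h1 h2 := by unfold eta1; split_ifs <;> omega
  mono i j h1 hij hj := by unfold eta1; split_ifs <;> omega
  pattern i j h1 h2 h3 h4 := by unfold eta1; rw [if_pos ⟨h1, h2⟩, if_pos ⟨h3, h4⟩]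
  no_point q hq y _ _ hy := by
    have hi := (m.sh_mem q hq).1
    obtain ⟨h1, h2, -⟩ := hy
    rw [colExt_eta1 m (i := q.1) (by omega)] at h1
    rw [colExt_eta1 m (i := q.1 + 1) (by omega)] at h2
    omega
  shaded q hq a b hab := by
    obtain ⟨hi, hj⟩ := m.sh_mem q hq
    obtain ⟨ha1, ha2, hb1, hb2⟩ := hab
    rw [colExt_eta1 m (i := q.1) (by omega)] at ha1
    rw [colExt_eta1 m (i := q.1 + 1) (by omega)] at ha2
    rw [valExt_eta1 m (j := q.2) (by omega)] at hb1
    rw [valExt_eta1 m (j := q.2 + 1) (by omega)] at hb2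
    obtain rfl : a = q.1 := by omega
    obtain rfl : b = q.2 := by omega
    exact hq

theorem self_le (m : MeshPattern) : m ≤ m := ⟨eta1 m, isOcc_eta1 m⟩

/-- Without shaded boxes in `m`, an occurrence is a classical one, and those compose. -/
theorem le_trans_of_sh_eq_empty {m c p : MeshPattern} (hm : m.sh = ∅) (hmc : m ≤ c)
    (hcp : c ≤ p) : m ≤ p := by
  obtain ⟨η₁, occ₁⟩ := hmc
  obtain ⟨η₂, occ₂⟩ := hcp
  refine ⟨η₂ ∘ η₁, ⟨fun i hi => ?_, fun i h1 h2 => ?_, fun i j h1 hij hj => ?_,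
    fun i j h1 h2 h3 h4 => ?_, by simp [hm], by simp [hm]⟩⟩
  · simp [occ₁.zero i hi, occ₂.zero 0 (Or.inl rfl)]
  · have := occ₁.mem i h1 h2
    exact occ₂.mem _ this.1 this.2
  · have hi := occ₁.mem i h1 (by omega)
    have hj' := occ₁.mem j (by omega) hj
    exact occ₂.mono _ _ hi.1 (occ₁.mono i j h1 hij hj) hj'.2
  · have hi := occ₁.mem i h1 h2
    have hj := occ₁.mem j h3 h4
    exact (occ₁.pattern i j h1 h2 h3 h4).trans (occ₂.pattern _ _ hi.1 hi.2 hj.1 hj.2)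

section Deletion

variable (p : MeshPattern)

theorem etaDel_of_mem {x i : ℕ} (h1 : 1 ≤ i) (h2 : i ≤ p.len - 1) :
    etaDel p x i = if i < x then i else i + 1 := by
  unfold etaDel; rw [if_pos ⟨h1, h2⟩]

theorem etaDel_mem {x : ℕ} (hx1 : 1 ≤ x) (hx2 : x ≤ p.len) {i : ℕ} (h1 : 1 ≤ i)
    (h2 : i ≤ p.len - 1) :
    1 ≤ etaDel p x i ∧ etaDel p x i ≤ p.len ∧ etaDel p x i ≠ x := by
  rw [p.etaDel_of_mem h1 h2]; split_ifs <;> omega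

theorem perm_etaDel_ne {x : ℕ} (hx1 : 1 ≤ x) (hx2 : x ≤ p.len) {i : ℕ} (h1 : 1 ≤ i)
    (h2 : i ≤ p.len - 1) : p.perm (etaDel p x i) ≠ p.perm x := fun h =>
  have he := p.etaDel_mem hx1 hx2 h1 h2
  he.2.2 (p.perm_inj _ _ he.1 he.2.1 hx1 hx2 h)

theorem delPerm_of_mem {x i : ℕ} (h1 : 1 ≤ i) (h2 : i ≤ p.len - 1) :
    delPerm p x i = if p.perm (etaDel p x i) < p.perm x then p.perm (etaDel p x i)
      else p.perm (etaDel p x i) - 1 := by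
  unfold delPerm; rw [if_pos ⟨h1, h2⟩]

theorem delPerm_lt_delPerm_iff {x : ℕ} (hx1 : 1 ≤ x) (hx2 : x ≤ p.len) {i j : ℕ}
    (hi1 : 1 ≤ i) (hi2 : i ≤ p.len - 1) (hj1 : 1 ≤ j) (hj2 : j ≤ p.len - 1) :
    delPerm p x i < delPerm p x j ↔ p.perm (etaDel p x i) < p.perm (etaDel p x j) := by
  obtain ⟨hi1', hi2', -⟩ := p.etaDel_mem hx1 hx2 hi1 hi2
  obtain ⟨hj1', hj2', -⟩ := p.etaDel_mem hx1 hx2 hj1 hj2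
  have := p.perm_mem _ hi1' hi2'
  have := p.perm_mem _ hj1' hj2'
  have := p.perm_etaDel_ne hx1 hx2 hi1 hi2
  have := p.perm_etaDel_ne hx1 hx2 hj1 hj2
  rw [p.delPerm_of_mem hi1 hi2, p.delPerm_of_mem hj1 hj2]
  split_ifs <;> omega

/-- The pattern `p − x`, with all shading forgotten. -/
def eraseAt (x : Finset.Icc 1 p.len) : MeshPattern where
  len := p.len - 1
  perm := delPerm p x
  sh := ∅
  perm_mem i h1 h2 := by
    obtain ⟨hx1, hx2⟩ := Finset.mem_Icc.1 x.2
    obtain ⟨he1, he2, -⟩ := p.etaDel_mem hx1 hx2 h1 h2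
    have := p.perm_mem _ he1 he2
    have := p.perm_mem x hx1 hx2
    have := p.perm_etaDel_ne hx1 hx2 h1 h2
    rw [p.delPerm_of_mem h1 h2]
    split_ifs <;> omega
  perm_zero i h := by unfold delPerm; rw [if_neg (by omega)]
  perm_inj i j h1 h2 h3 h4 h := by
    obtain ⟨hx1, hx2⟩ := Finset.mem_Icc.1 x.2
    have hij := p.delPerm_lt_delPerm_iff hx1 hx2 h1 h2 h3 h4
    have hji := p.delPerm_lt_delPerm_iff hx1 hx2 h3 h4 h1 h2
    obtain ⟨hi1, hi2, -⟩ := p.etaDel_mem hx1 hx2 h1 h2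
    obtain ⟨hj1, hj2, -⟩ := p.etaDel_mem hx1 hx2 h3 h4
    have := p.perm_inj _ _ hi1 hi2 hj1 hj2 (by omega)
    rw [p.etaDel_of_mem h1 h2, p.etaDel_of_mem h3 h4] at this
    split_ifs at this <;> omega
  perm_surj v h1 h2 := by
    obtain ⟨hx1, hx2⟩ := Finset.mem_Icc.1 x.2
    have := p.perm_mem x hx1 hx2
    obtain ⟨w, hw1, hw2, hwx, rfl⟩ : ∃ w, 1 ≤ w ∧ w ≤ p.len ∧ w ≠ p.perm x ∧
        (if w < p.perm x then w else w - 1) = v :=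
      ⟨if v < p.perm x then v else v + 1, by split_ifs <;> omega, by split_ifs <;> omega,
        by split_ifs <;> omega, by split_ifs <;> omega⟩
    obtain ⟨i, hi1, hi2, rfl⟩ := p.perm_surj w hw1 hw2
    have hix : i ≠ x := by rintro rfl; exact hwx rfl
    obtain ⟨i', h1', h2', hi'⟩ : ∃ i', 1 ≤ i' ∧ i' ≤ p.len - 1 ∧
        (if i' < x then i' else i' + 1) = i :=
      ⟨if i < x then i else i - 1, by split_ifs <;> omega, by split_ifs <;> omega,
        by split_ifs <;> omega⟩
    refine ⟨i', h1', h2', ?_⟩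
    rw [p.delPerm_of_mem h1' h2', p.etaDel_of_mem h1' h2', hi']
  sh_mem := by simp

@[simp] theorem eraseAt_len (x : Finset.Icc 1 p.len) : (p.eraseAt x).len = p.len - 1 := rfl

@[simp] theorem eraseAt_perm (x : Finset.Icc 1 p.len) : (p.eraseAt x).perm = delPerm p x :=
  rfl

@[simp] theorem eraseAt_sh (x : Finset.Icc 1 p.len) : (p.eraseAt x).sh = ∅ := rfl

theorem isOcc_eraseAt (x : Finset.Icc 1 p.len) : IsOcc (p.eraseAt x) p (etaDel p x) where
  zero i h := by unfold etaDel; rw [if_neg (by simp only [eraseAt_len] at h; omega)]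
  mem i h1 h2 := by
    obtain ⟨hx1, hx2⟩ := Finset.mem_Icc.1 x.2
    exact (p.etaDel_mem hx1 hx2 h1 h2).imp_right And.left
  mono i j h1 hij hj := by
    simp only [eraseAt_len] at hj
    rw [p.etaDel_of_mem h1 (by omega), p.etaDel_of_mem (by omega) hj]
    split_ifs <;> omega
  pattern i j h1 h2 h3 h4 := by
    obtain ⟨hx1, hx2⟩ := Finset.mem_Icc.1 x.2
    exact p.delPerm_lt_delPerm_iff hx1 hx2 h1 h2 h3 h4
  no_point := by simp
  shaded := by simp

theorem eraseAt_le (x : Finset.Icc 1 p.len) : p.eraseAt x ≤ p := ⟨_, p.isOcc_eraseAt x⟩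

open Classical in
noncomputable def deletions : Finset MeshPattern := Finset.univ.image p.eraseAt

variable {p}

theorem mem_deletions {c : MeshPattern} : c ∈ p.deletions ↔ ∃ x, p.eraseAt x = c := by
  simp [deletions]

/-- An occurrence of a pattern with one point fewer misses exactly one position `x`: the first
`i` with `η i ≠ i`. -/
theorem mem_deletions_of_le {c : MeshPattern} (h : c ≤ p) (hlen : c.len + 1 = p.len)
    (hp : p.sh = ∅) : c ∈ p.deletions := by
  obtain ⟨η, occ⟩ := h
  have hex : ∃ x, 1 ≤ x ∧ η x ≠ x :=
    ⟨c.len + 1, by omega, by rw [occ.zero _ (by omega)]; omega⟩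
  set x := Nat.find hex
  obtain ⟨hx1, hxη⟩ := Nat.find_spec hex
  have hbefore : ∀ i, 1 ≤ i → i < x → η i = i := fun i h1 hi => by
    by_contra hne
    exact Nat.find_min hex hi ⟨h1, hne⟩
  have hxlen : x ≤ c.len + 1 :=
    Nat.find_min' hex ⟨by omega, by rw [occ.zero _ (by omega)]; omega⟩
  have hη : ∀ i, 1 ≤ i → i ≤ c.len → η i = etaDel p x i := fun i h1 h2 => by
    rw [p.etaDel_of_mem h1 (by omega)]
    split_ifs with hi
    · exact hbefore i h1 hi
    · have := occ.le_apply hx1 (by omega)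
      have := occ.apply_add_sub_le_len hx1 (by omega)
      have := occ.apply_add_sub_le hx1 (not_lt.1 hi) h2
      have := occ.apply_add_sub_le_len h1 h2
      omega
  have hx : x ∈ Finset.Icc 1 p.len := Finset.mem_Icc.2 ⟨hx1, by omega⟩
  refine mem_deletions.2 ⟨⟨x, hx⟩, ?_⟩
  have hlen' : c.len = (p.eraseAt ⟨x, hx⟩).len := by rw [eraseAt_len]; omega
  refine (ext hlen' (perm_eq_of_lt_iff hlen' fun i j hi1 hi2 hj1 hj2 => ?_)
    (by rw [occ.sh_eq_empty hp, eraseAt_sh])).symm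
  rw [eraseAt_perm, p.delPerm_lt_delPerm_iff hx1 (by omega) hi1 (by omega) hj1 (by omega),
    ← hη i hi1 hi2, ← hη j hj1 hj2]
  exact occ.pattern i j hi1 hi2 hj1 hj2

end Deletion

section Mobius

variable {α : Type*} {r : α → α → Prop} {a b : α}

theorem muFuel_self (n : ℕ) (a : α) : muFuel r n a a = 1 := by
  cases n <;> simp [muFuel]

theorem muFuel_succ_of_ne (n : ℕ) (hab : a ≠ b) (h : r a b) :
    muFuel r (n + 1) a b = -∑ᶠ c ∈ {c | r a c ∧ r c b ∧ c ≠ b}, muFuel r n a c := by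
  simp only [muFuel, if_neg hab, if_pos h]

theorem muFuel_succ_of_covBy (n : ℕ) (hab : a ≠ b) (h : r a b)
    (hint : {c | r a c ∧ r c b ∧ c ≠ b} = {a}) : muFuel r (n + 1) a b = -1 := by
  rw [muFuel_succ_of_ne n hab h, hint, finsum_mem_singleton, muFuel_self]

theorem muFuel_add_two_of_rank_two (n : ℕ) (hab : a ≠ b) (h : r a b) {s : Finset α}
    (has : a ∉ s) (hint : {c | r a c ∧ r c b ∧ c ≠ b} = insert a ↑s)
    (hs : ∀ c ∈ s, {d | r a d ∧ r d c ∧ d ≠ c} = {a}) :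
    muFuel r (n + 2) a b = s.card - 1 := by
  have hatom : ∀ c ∈ s, muFuel r (n + 1) a c = -1 := fun c hc => by
    have hc' : c ∈ {c | r a c ∧ r c b ∧ c ≠ b} := hint ▸ Set.mem_insert_of_mem a hc
    exact muFuel_succ_of_covBy n (fun hac => has (hac ▸ hc)) hc'.1 (hs c hc)
  rw [muFuel_succ_of_ne _ hab h, hint, finsum_mem_insert _ (by exact_mod_cast has) s.finite_toSet,
    muFuel_self, finsum_mem_coe_finset, Finset.sum_congr rfl hatom, Finset.sum_const, smul_neg,
    nsmul_one]
  ring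

end Mobius

theorem mu_eq_card_sub_one {m p : MeshPattern} (hmp : m ≤ p) (hp : p.sh = ∅)
    (hlen : p.len = m.len + 2) (s : Finset MeshPattern)
    (hs : ∀ c, c ∈ s ↔ m ≤ c ∧ c ≤ p ∧ c.len = m.len + 1) : mu m p = s.card - 1 := by
  have hunshaded : ∀ {c}, c ≤ p → c.sh = ∅ := fun hcp => sh_eq_empty_of_le hcp hp
  have hmc : ∀ c ∈ s, m ≠ c := fun c hc => ne_of_len_ne (by have := ((hs c).1 hc).2.2; omega)
  have hfuel : p.dim + 1 = (m.len + 1) + 2 := by simp [dim, hp, hlen]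
  rw [mu, hfuel]
  refine muFuel_add_two_of_rank_two _ (ne_of_len_ne (by omega)) hmp (fun hm => hmc m hm rfl)
    (Set.ext fun c => ⟨fun ⟨h1, h2, h3⟩ => ?_, ?_⟩)
    fun c hc => Set.ext fun d => ⟨?_, ?_⟩
  · have := len_le_of_le h1
    have := len_le_of_le h2
    by_cases hc : c.len = m.len
    · exact Or.inl (eq_of_le_of_len_eq h1 hc.symm (hunshaded h2)).symm
    · exact Or.inr ((hs c).2 ⟨h1, h2, by have := mt (eq_of_le_of_len_eq h2 · hp) h3; omega⟩)
  · rintro (rfl | hc)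
    · exact ⟨self_le c, hmp, ne_of_len_ne (by omega)⟩
    · obtain ⟨h1, h2, h3⟩ := (hs c).1 hc
      exact ⟨h1, h2, ne_of_len_ne (by omega)⟩
  · rintro ⟨h1, h2, h3⟩
    obtain ⟨-, hcp, hclen⟩ := (hs c).1 hc
    have := len_le_of_le h1
    have := len_le_of_le h2
    by_cases hd : d.len = m.len
    · exact (eq_of_le_of_len_eq h1 hd.symm (sh_eq_empty_of_le h2 (hunshaded hcp))).symm
    · exact absurd (eq_of_le_of_len_eq h2 (by omega) (hunshaded hcp)) h3
  · rintro rfl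
    obtain ⟨h1, -, -⟩ := (hs c).1 hc
    exact ⟨self_le d, h1, hmc c hc⟩

def oddsEvens (k : ℕ) : MeshPattern where
  len := 2 * k
  perm i := if 1 ≤ i ∧ i ≤ 2 * k then (if i ≤ k then 2 * i - 1 else 2 * (i - k)) else 0
  sh := ∅
  perm_mem i h1 h2 := by split_ifs <;> omega
  perm_zero i h := by rw [if_neg (by omega)]
  perm_inj i j h1 h2 h3 h4 h := by split_ifs at h <;> omega
  perm_surj v h1 h2 :=
    ⟨if v % 2 = 1 then (v + 1) / 2 else k + v / 2, by split_ifs <;> omega,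
      by split_ifs <;> omega, by split_ifs <;> omega⟩
  sh_mem := by simp

@[simp] theorem oddsEvens_len (k : ℕ) : (oddsEvens k).len = 2 * k := rfl

@[simp] theorem oddsEvens_sh (k : ℕ) : (oddsEvens k).sh = ∅ := rfl

theorem oddsEvens_perm (k i : ℕ) : (oddsEvens k).perm i =
    if 1 ≤ i ∧ i ≤ 2 * k then (if i ≤ k then 2 * i - 1 else 2 * (i - k)) else 0 := rfl

theorem delPerm_oddsEvens {k x i : ℕ} (hx1 : 1 ≤ x) (hx2 : x ≤ 2 * k) (hi1 : 1 ≤ i)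
    (hi2 : i ≤ 2 * k - 1) :
    delPerm (oddsEvens k) x i =
      if x ≤ k then
        (if i ≤ x - 1 then 2 * i - 1 else if i ≤ k - 1 then 2 * i
         else if i ≤ k + x - 2 then 2 * (i - k) + 2 else 2 * (i - k) + 1)
      else
        (if i ≤ x - k then 2 * i - 1 else if i ≤ k then 2 * i - 2
         else if i ≤ x - 1 then 2 * (i - k) else 2 * (i - k) + 1) := by
  have hi : i ≤ (oddsEvens k).len - 1 := by simpa using hi2
  rw [delPerm_of_mem _ hi1 hi, etaDel_of_mem _ hi1 hi]
  simp only [oddsEvens_perm]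
  split_ifs <;> omega

/-- Two deletions differ at position `1` or `k` when the deleted positions lie on different
halves, and at the first deleted position otherwise. -/
theorem eq_of_delPerm_oddsEvens_eq {k x y : ℕ} (hk : 3 ≤ k) (hx1 : 1 ≤ x) (hx2 : x ≤ 2 * k)
    (hy1 : 1 ≤ y) (hy2 : y ≤ 2 * k) (h : delPerm (oddsEvens k) x = delPerm (oddsEvens k) y) :
    x = y := by
  have key : ∀ i, 1 ≤ i → i ≤ 2 * k - 1 → _ := fun i hi1 hi2 => by
    have := congrFun h i
    rwa [delPerm_oddsEvens hx1 hx2 hi1 hi2, delPerm_oddsEvens hy1 hy2 hi1 hi2] at this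
  by_contra hne
  by_cases hxy : (x ≤ k ↔ y ≤ k)
  · have := key (min x y) (by omega) (by omega)
    split_ifs at this <;> omega
  · by_cases h1 : x = 1 ∨ y = 1
    · have := key 1 le_rfl (by omega)
      split_ifs at this <;> omega
    · have := key k (by omega) (by omega)
      split_ifs at this <;> omega

theorem eraseAt_oddsEvens_injective {k : ℕ} (hk : 3 ≤ k) :
    Function.Injective (oddsEvens k).eraseAt := fun x y h => by
  obtain ⟨hx1, hx2⟩ := Finset.mem_Icc.1 x.2
  obtain ⟨hy1, hy2⟩ := Finset.mem_Icc.1 y.2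
  have := congrArg perm h
  simp only [eraseAt_perm] at this
  exact Subtype.ext (eq_of_delPerm_oddsEvens_eq hk hx1 hx2 hy1 hy2 this)

set_option maxHeartbeats 1000000 in
/-- Deleting, besides the point at position `x`, the point whose value is adjacent to it (the
other member of the pair `2j-1, 2j`) leaves `oddsEvens k`. -/
theorem delPerm_eraseAt_oddsEvens {k : ℕ}
    (x : Finset.Icc 1 (oddsEvens (k + 1)).len) :
    delPerm ((oddsEvens (k + 1)).eraseAt x) (if x ≤ k + 1 then k + x else x - (k + 1)) =
      (oddsEvens k).perm := by
  obtain ⟨hx1, hx2⟩ := Finset.mem_Icc.1 x.2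
  simp only [oddsEvens_len] at hx2
  funext i
  by_cases hi : 1 ≤ i ∧ i ≤ 2 * k
  · have hlen : i ≤ ((oddsEvens (k + 1)).eraseAt x).len - 1 := by
      rw [eraseAt_len, oddsEvens_len]; omega
    rw [delPerm_of_mem _ hi.1 hlen, etaDel_of_mem _ hi.1 hlen, eraseAt_perm, oddsEvens_perm]
    rcases le_or_gt (x : ℕ) (k + 1) with hxk | hxk
    · rw [if_pos hxk, delPerm_oddsEvens hx1 hx2 (i := if i < k + x then i else i + 1)
        (by split_ifs <;> omega) (by split_ifs <;> omega),
        delPerm_oddsEvens hx1 hx2 (i := k + x) (by omega) (by omega)]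
      split_ifs <;> omega
    · rw [if_neg (not_le.2 hxk),
        delPerm_oddsEvens hx1 hx2 (i := if i < x - (k + 1) then i else i + 1)
        (by split_ifs <;> omega) (by split_ifs <;> omega),
        delPerm_oddsEvens hx1 hx2 (i := x - (k + 1)) (by omega) (by omega)]
      split_ifs <;> omega
  · unfold delPerm
    rw [if_neg (by rw [eraseAt_len, oddsEvens_len]; omega), oddsEvens_perm, if_neg (by omega)]

theorem oddsEvens_le_eraseAt {k : ℕ} (x : Finset.Icc 1 (oddsEvens (k + 1)).len) :
    oddsEvens k ≤ (oddsEvens (k + 1)).eraseAt x := by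
  obtain ⟨hx1, hx2⟩ := Finset.mem_Icc.1 x.2
  simp only [oddsEvens_len] at hx2
  have hy : (if x ≤ k + 1 then k + x else x - (k + 1)) ∈
      Finset.Icc 1 ((oddsEvens (k + 1)).eraseAt x).len := by
    simp only [Finset.mem_Icc, eraseAt_len, oddsEvens_len]
    split_ifs <;> omega
  have heq : ((oddsEvens (k + 1)).eraseAt x).eraseAt ⟨_, hy⟩ = oddsEvens k :=
    ext (by rw [eraseAt_len, eraseAt_len, oddsEvens_len, oddsEvens_len]; omega)
      (delPerm_eraseAt_oddsEvens x) rfl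
  exact heq ▸ eraseAt_le _ _

theorem oddsEvens_le_succ (k : ℕ) : oddsEvens k ≤ oddsEvens (k + 1) :=
  have h1 : 1 ∈ Finset.Icc 1 (oddsEvens (k + 1)).len :=
    Finset.mem_Icc.2 ⟨le_rfl, by rw [oddsEvens_len]; omega⟩
  le_trans_of_sh_eq_empty rfl (oddsEvens_le_eraseAt ⟨1, h1⟩) (eraseAt_le _ _)

theorem mu_oddsEvens {k : ℕ} (hk : 2 ≤ k) :
    mu (oddsEvens k) (oddsEvens (k + 1)) = 2 * k + 1 := by
  have hmem : ∀ c, c ∈ (oddsEvens (k + 1)).deletions ↔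
      oddsEvens k ≤ c ∧ c ≤ oddsEvens (k + 1) ∧ c.len = (oddsEvens k).len + 1 := fun c =>
    ⟨fun hc => by
      obtain ⟨x, rfl⟩ := mem_deletions.1 hc
      exact ⟨oddsEvens_le_eraseAt x, eraseAt_le _ x,
        by rw [eraseAt_len, oddsEvens_len, oddsEvens_len]; omega⟩,
    fun ⟨_, hcp, hlen⟩ => mem_deletions_of_le hcp
      (by rw [hlen, oddsEvens_len, oddsEvens_len]; omega) rfl⟩
  have hcard : (oddsEvens (k + 1)).deletions.card = 2 * k + 2 := by
    classical
    rw [deletions, Finset.card_image_of_injective _ (eraseAt_oddsEvens_injective (by omega)),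
      Finset.card_univ, Fintype.card_coe, Nat.card_Icc, oddsEvens_len]
    omega
  rw [mu_eq_card_sub_one (oddsEvens_le_succ k) rfl
    (by rw [oddsEvens_len, oddsEvens_len]; omega) _ hmem, hcard]
  push_cast
  ring

/-- The Möbius function is unbounded on the mesh pattern poset. -/
theorem mu_unbounded : ∀ N : ℕ, ∃ m p : MeshPattern, m ≤ p ∧ (N : ℤ) < |mu m p| := by
  intro N
  refine ⟨oddsEvens (N + 2), oddsEvens (N + 3), oddsEvens_le_succ _, ?_⟩
  rw [mu_oddsEvens (by omega)]
  push_cast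
  rw [abs_of_nonneg (by positivity)]
  omega

end MeshPattern
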